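/- arXiv:0902.4674 — 5 statements merged into one kernel-verified Lean document; each statement's English description precedes it below -/
import Mathlib

section
/- Let g be a real Lie algebra with an invariant inner product ⟨-,-⟩. On the vector space W(g) = g ⊕ ℝu ⊕ ℝv define the 3-brackets [u,x,y] = [x,y] and [x,y,z] = -⟨[x,y],z⟩v for x,y,z ∈ g (all brackets involving v, and all other brackets, vanish). Then this 3-bracket is alternating and satisfies the fundamental identity. -/
/-- For a real Lie algebra `g` with an invariant inner product, the 3-bracket
on `W(g) = g ⊕ ℝu ⊕ ℝv` given by `[u,x,y] = [x,y]` and `[x,y,z] = -⟨[x,y],z⟩ v` (with `v`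
central and all other brackets zero) is alternating and satisfies the fundamental identity.
An element `(x, a, b)` of `g × ℝ × ℝ` stands for `x + a·u + b·v`. -/
theorem stmt2 {g : Type*} [LieRing g] [LieAlgebra ℝ g]
    (B : g →ₗ[ℝ] g →ₗ[ℝ] ℝ)
    (hsymm : ∀ x y : g, B x y = B y x)
    (hinv : ∀ x y z : g, B ⁅x, y⁆ z = B x ⁅y, z⁆)
    (T : (g × ℝ × ℝ) → (g × ℝ × ℝ) → (g × ℝ × ℝ) → (g × ℝ × ℝ))
    (hT : ∀ p q s : g × ℝ × ℝ,
      T p q s = (p.2.1 • ⁅q.1, s.1⁆ + q.2.1 • ⁅s.1, p.1⁆ + s.2.1 • ⁅p.1, q.1⁆,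
                 (0 : ℝ), - B ⁅p.1, q.1⁆ s.1)) :
    (∀ p q s : g × ℝ × ℝ, T p q s = - T q p s ∧ T p q s = - T p s q) ∧
    (∀ p q a b c : g × ℝ × ℝ,
      T p q (T a b c) = T (T p q a) b c + T a (T p q b) c + T a b (T p q c)) := by
  have skew2 : ∀ x y z : g, B ⁅x, y⁆ z = - B ⁅x, z⁆ y := by
    intro x y z
    rw [hinv, hinv, ← lie_skew z y, map_neg, neg_neg]
  constructor
  · intro p q s
    constructor
    · rw [hT, hT]
      ext
      · simp only [Prod.fst_neg, Prod.snd_neg]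
        rw [← lie_skew q.1 p.1, ← lie_skew s.1 q.1, ← lie_skew p.1 s.1]
        module
      · simp
      · simp only [Prod.snd_neg, Prod.fst_neg]
        rw [← lie_skew q.1 p.1, map_neg]
        simp
    · rw [hT, hT]
      ext
      · simp only [Prod.fst_neg, Prod.snd_neg]
        rw [← lie_skew p.1 q.1, ← lie_skew q.1 s.1, ← lie_skew s.1 p.1]
        module
      · simp
      · simp only [Prod.snd_neg, Prod.fst_neg]
        rw [skew2]
  have L1 : ∀ r x y : g, B r ⁅y, x⁆ = B ⁅x, r⁆ y := by
    intro r x y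
    rw [hsymm, hinv, hsymm]
  have hder1 : ∀ x a b c : g, B ⁅⁅x,a⁆,b⁆ c + B ⁅a,⁅x,b⁆⁆ c + B ⁅a,b⁆ ⁅x,c⁆ = 0 := by
    intro x a b c
    have h : B ⁅⁅x,a⁆,b⁆ c + B ⁅a,⁅x,b⁆⁆ c = B ⁅x,⁅a,b⁆⁆ c := by
      rw [leibniz_lie x a b, map_add, LinearMap.add_apply]
    rw [h, show (⁅x,⁅a,b⁆⁆ : g) = -⁅⁅a,b⁆,x⁆ from (lie_skew _ _).symm, map_neg,
      LinearMap.neg_apply, hinv]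
    ring
  have hder2 : ∀ x a b c : g, B ⁅⁅a,x⁆,b⁆ c + B ⁅a,⁅b,x⁆⁆ c + B ⁅a,b⁆ ⁅c,x⁆ = 0 := by
    intro x a b c
    have h := hder1 x a b c
    rw [show (⁅a,x⁆ : g) = -⁅x,a⁆ from (lie_skew _ _).symm,
      show (⁅b,x⁆ : g) = -⁅x,b⁆ from (lie_skew _ _).symm,
      show (⁅c,x⁆ : g) = -⁅x,c⁆ from (lie_skew _ _).symm]
    simp only [neg_lie, lie_neg, map_neg, LinearMap.neg_apply]
    linarith
  have aux : ∀ x y z : g, ⁅⁅y,z⁆,x⁆ = ⁅⁅y,x⁆,z⁆ + ⁅y,⁅z,x⁆⁆ := by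
    intro x y z
    rw [leibniz_lie y z x, show ⁅(⁅y,x⁆:g),z⁆ = -⁅z,⁅y,x⁆⁆ from (lie_skew _ _).symm]
    abel
  · intro p q a b c
    simp only [hT]
    ext
    · simp only [Prod.fst_add, smul_add, lie_add, add_lie, lie_smul, smul_lie, zero_smul,
        smul_zero, zero_add, add_zero, smul_smul]
      rw [leibniz_lie q.1 b.1 c.1, leibniz_lie q.1 c.1 a.1, leibniz_lie q.1 a.1 b.1,
        aux p.1 b.1 c.1, aux p.1 c.1 a.1, aux p.1 a.1 b.1,
        show ⁅(⁅p.1,q.1⁆ : g),c.1⁆ = -⁅c.1,⁅p.1,q.1⁆⁆ from (lie_skew _ _).symm,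
        show ⁅(⁅p.1,q.1⁆ : g),a.1⁆ = -⁅a.1,⁅p.1,q.1⁆⁆ from (lie_skew _ _).symm,
        show ⁅(⁅p.1,q.1⁆ : g),b.1⁆ = -⁅b.1,⁅p.1,q.1⁆⁆ from (lie_skew _ _).symm]
      module
    · simp
    · simp only [Prod.snd_add, Prod.fst_add, add_lie, lie_add, smul_lie, lie_smul, map_add,
        map_smul, LinearMap.add_apply, LinearMap.smul_apply, smul_eq_mul]
      linear_combination a.2.1 * hinv ⁅p.1,q.1⁆ b.1 c.1 - b.2.1 * L1 ⁅p.1,q.1⁆ a.1 c.1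
        - c.2.1 * hsymm ⁅p.1,q.1⁆ ⁅a.1,b.1⁆ + p.2.1 * hder1 q.1 a.1 b.1 c.1
        + q.2.1 * hder2 p.1 a.1 b.1 c.1
end

section
/- For r ≤ 4, any totally skew-symmetric family K_{ijk} (i,j,k = 1,...,r) of vectors in a real inner product space E₀ automatically satisfies the quadratic relation ⟨K_{ijn},K_{kℓm}⟩ + ⟨K_{ijℓ},K_{mnk}⟩ - ⟨K_{ijm},K_{nkℓ}⟩ - ⟨K_{ijk},K_{ℓmn}⟩ = 0 for all i,j,k,ℓ,m,n ∈ {1,...,r}. -/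
open scoped RealInnerProductSpace

section Aux

variable {E₀ : Type*} [NormedAddCommGroup E₀] [InnerProductSpace ℝ E₀]
variable {r : ℕ}

/-- The quadratic expression. -/
def Fexpr (K : Fin r → Fin r → Fin r → E₀) (i j k l m n : Fin r) : ℝ :=
  ⟪K i j n, K k l m⟫ + ⟪K i j l, K m n k⟫ - ⟪K i j m, K n k l⟫ - ⟪K i j k, K l m n⟫

variable {K : Fin r → Fin r → Fin r → E₀}
variable (hskew : ∀ i j k, K i j k = - K j i k ∧ K i j k = - K i k j)

include hskew

lemma Kzero1 (i k : Fin r) : K i i k = 0 := by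
  have h := (hskew i i k).1
  have h2 : (2 : ℝ) • K i i k = 0 := by
    rw [two_smul]; nth_rewrite 1 [h]; simp
  exact (smul_eq_zero.mp h2).resolve_left (by norm_num)

lemma Kzero2 (i j : Fin r) : K i j j = 0 := by
  have h := (hskew i j j).2
  have h2 : (2 : ℝ) • K i j j = 0 := by
    rw [two_smul]; nth_rewrite 1 [h]; simp
  exact (smul_eq_zero.mp h2).resolve_left (by norm_num)

lemma Kzero3 (i j : Fin r) : K i j i = 0 := by
  rw [(hskew i j i).2, Kzero1 hskew]; simp

lemma Kcyc (i j k : Fin r) : K i j k = K j k i := by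
  rw [(hskew i j k).1, (hskew j i k).2, neg_neg]

/-- swapping `k,l` negates the expression -/
lemma Fswap1 (i j k l m n : Fin r) :
    Fexpr K i j k l m n = - Fexpr K i j l k m n := by
  have h1 : K l k m = -K k l m := (hskew l k m).1
  have h2 : K m n l = K l m n := by rw [Kcyc hskew m n l, Kcyc hskew n l m]
  have h3 : K n l k = -K n k l := (hskew n l k).2
  have h4 : K k m n = K m n k := Kcyc hskew k m n
  simp only [Fexpr, h1, h2, h3, h4, inner_neg_right]
  ring

/-- swapping `l,m` negates the expression -/
lemma Fswap2 (i j k l m n : Fin r) :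
    Fexpr K i j k m l n = - Fexpr K i j k l m n := by
  have h1 : K k m l = -K k l m := (hskew k m l).2
  have h2 : K l n k = K n k l := by rw [Kcyc hskew l n k, Kcyc hskew n k l]
  have h3 : K n k m = K m n k := by rw [Kcyc hskew n k m, Kcyc hskew k m n]
  have h4 : K m l n = -K l m n := (hskew m l n).1
  simp only [Fexpr, h1, h2, h3, h4, inner_neg_right]
  ring

/-- swapping `m,n` negates the expression -/
lemma Fswap3 (i j k l m n : Fin r) :
    Fexpr K i j k l n m = - Fexpr K i j k l m n := by
  have h1 : K k l n = K n k l := by rw [Kcyc hskew k l n, Kcyc hskew l n k]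
  have h2 : K n m k = -K m n k := (hskew n m k).1
  have h3 : K m k l = K k l m := Kcyc hskew m k l
  have h4 : K l n m = -K l m n := (hskew l n m).2
  simp only [Fexpr, h1, h2, h3, h4, inner_neg_right]
  ring

lemma Fcore (i j m n : Fin r) : Fexpr K i j i j m n = 0 := by
  have h1 : K i j j = 0 := Kzero2 hskew i j
  have h2 : K i j i = 0 := Kzero3 hskew i j
  have h3 : K n i j = K i j n := by rw [Kcyc hskew i j n, Kcyc hskew j n i]
  simp only [Fexpr, h1, h2, h3, inner_zero_left]
  rw [real_inner_comm]
  ring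

lemma Fdiag (i k l m n : Fin r) : Fexpr K i i k l m n = 0 := by
  have h1 : ∀ x, K i i x = 0 := fun x => Kzero1 hskew i x
  simp only [Fexpr, h1, inner_zero_left]
  ring

lemma Fcore2 (i j l m n : Fin r) (hj : j = l ∨ j = m ∨ j = n) :
    Fexpr K i j i l m n = 0 := by
  rcases hj with rfl | rfl | rfl
  · exact Fcore hskew i j m n
  · rw [Fswap2 hskew, Fcore hskew]; ring
  · rw [Fswap3 hskew, Fswap2 hskew, Fcore hskew]; ring

lemma Fcore3 (i j k l m n : Fin r)
    (hi : i = k ∨ i = l ∨ i = m ∨ i = n)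
    (hj : j = k ∨ j = l ∨ j = m ∨ j = n)
    (hij : j ≠ i) :
    Fexpr K i j k l m n = 0 := by
  rcases hi with rfl | rfl | rfl | rfl
  · exact Fcore2 hskew i j l m n (by tauto)
  · rw [Fswap1 hskew, Fcore2 hskew i j k m n (by tauto)]; ring
  · rw [Fswap2 hskew, Fswap1 hskew, Fcore2 hskew i j k l n (by tauto)]; ring
  · rw [Fswap3 hskew, Fswap2 hskew, Fswap1 hskew,
      Fcore2 hskew i j k l m (by tauto)]; ring

lemma Fdegen_kl (i j k m n : Fin r) : Fexpr K i j k k m n = 0 := by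
  have h := Fswap1 hskew i j k k m n
  linarith

lemma Fdegen_lm (i j k l n : Fin r) : Fexpr K i j k l l n = 0 := by
  have h := Fswap2 hskew i j k l l n
  linarith

lemma Fdegen_mn (i j k l m : Fin r) : Fexpr K i j k l m m = 0 := by
  have h := Fswap3 hskew i j k l m m
  linarith

lemma Fdegen_km (i j k l n : Fin r) : Fexpr K i j k l k n = 0 := by
  rw [Fswap2 hskew, Fdegen_kl hskew]; ring

lemma Fdegen_kn (i j k l m : Fin r) : Fexpr K i j k l m k = 0 := by
  rw [Fswap3 hskew, Fswap2 hskew, Fdegen_kl hskew]; ring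

lemma Fdegen_ln (i j k l m : Fin r) : Fexpr K i j k l m l = 0 := by
  rw [Fswap3 hskew, Fdegen_lm hskew]; ring

end Aux

/-- for `r ≤ 4`, any totally skew-symmetric family `K_{ijk}` of vectors in a
real inner product space `E₀` automatically satisfies the quadratic relation
`⟨K_{ijn},K_{kℓm}⟩ + ⟨K_{ijℓ},K_{mnk}⟩ - ⟨K_{ijm},K_{nkℓ}⟩ - ⟨K_{ijk},K_{ℓmn}⟩ = 0`. -/
theorem stmt8 {E₀ : Type*} [NormedAddCommGroup E₀] [InnerProductSpace ℝ E₀]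
    {r : ℕ} (hr : r ≤ 4)
    (K : Fin r → Fin r → Fin r → E₀)
    (hskew : ∀ i j k, K i j k = - K j i k ∧ K i j k = - K i k j) :
    ∀ i j k l m n,
      ⟪K i j n, K k l m⟫ + ⟪K i j l, K m n k⟫ - ⟪K i j m, K n k l⟫ - ⟪K i j k, K l m n⟫
        = 0 := by
  intro i j k l m n
  show Fexpr K i j k l m n = 0
  by_cases hij : j = i
  · subst hij; exact Fdiag hskew j k l m n
  by_cases hkl : k = l
  · subst hkl; exact Fdegen_kl hskew i j k m n
  by_cases hkm : k = m
  · subst hkm; exact Fdegen_km hskew i j k l n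
  by_cases hkn : k = n
  · subst hkn; exact Fdegen_kn hskew i j k l m
  by_cases hlm : l = m
  · subst hlm; exact Fdegen_lm hskew i j k l n
  by_cases hln : l = n
  · subst hln; exact Fdegen_ln hskew i j k l m
  by_cases hmn : m = n
  · subst hmn; exact Fdegen_mn hskew i j k l m
  -- all of k, l, m, n are distinct, hence r = 4 and {k,l,m,n} = univ
  have hcard : ({k, l, m, n} : Finset (Fin r)).card = 4 := by
    rw [Finset.card_insert_of_notMem (by simp [hkl, hkm, hkn]),
      Finset.card_insert_of_notMem (by simp [hlm, hln]),
      Finset.card_insert_of_notMem (by simp [hmn]),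
      Finset.card_singleton]
  have huniv : ({k, l, m, n} : Finset (Fin r)) = Finset.univ := by
    apply Finset.eq_univ_of_card
    rw [hcard]
    have h4 : 4 ≤ r := by
      have := Finset.card_le_univ ({k, l, m, n} : Finset (Fin r))
      simpa [hcard] using this
    simp
    omega
  have hmem : ∀ x : Fin r, x = k ∨ x = l ∨ x = m ∨ x = n := by
    intro x
    have : x ∈ ({k, l, m, n} : Finset (Fin r)) := by
      rw [huniv]; exact Finset.mem_univ x
    simpa using this
  exact Fcore3 hskew i j k l m n (hmem i) (hmem j) hij
end

section
/- Let E be a euclidean vector space and J ∈ so(E) a skew-symmetric endomorphism. On V = ℝu ⊕ ℝv ⊕ E define the bracket [u,x] = Jx, [x,y] = -⟨x,Jy⟩v for x,y ∈ E, with v central. Then V is a Lie algebra (the Jacobi identity holds), and the inner product extending that of E with ⟨u,v⟩=1, ⟨u,u⟩=⟨v,v⟩=0, u,v ⊥ E is invariant: ⟨[a,b],c⟩ = ⟨a,[b,c]⟩ for all a,b,c ∈ V. -/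
open scoped RealInnerProductSpace

/-- the double extension `d(E,ℝ)` of a euclidean space `E` by a skew
endomorphism `J`.  On `V = ℝu ⊕ ℝv ⊕ E` (elements `(a, b, x)` standing for
`a·u + b·v + x`) the bracket `[u,x] = Jx`, `[x,y] = -⟨x,Jy⟩v` (with `v` central) satisfies
the Jacobi identity, and the inner product `⟨u,v⟩ = 1`, `⟨u,u⟩ = ⟨v,v⟩ = 0`, `u,v ⊥ E`
extending that of `E` is invariant. -/
theorem stmt10 {E : Type*} [NormedAddCommGroup E] [InnerProductSpace ℝ E]
    (J : E →ₗ[ℝ] E)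
    (hJskew : ∀ x y : E, ⟪J x, y⟫ = - ⟪x, J y⟫)
    (br : (ℝ × ℝ × E) → (ℝ × ℝ × E) → (ℝ × ℝ × E))
    (hbr : ∀ p q : ℝ × ℝ × E,
      br p q = ((0 : ℝ), - ⟪p.2.2, J q.2.2⟫, p.1 • J q.2.2 - q.1 • J p.2.2))
    (ip : (ℝ × ℝ × E) → (ℝ × ℝ × E) → ℝ)
    (hip : ∀ p q : ℝ × ℝ × E, ip p q = p.1 * q.2.1 + p.2.1 * q.1 + ⟪p.2.2, q.2.2⟫) :
    (∀ p, br p p = 0) ∧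
    (∀ p q s, br (br p q) s + br (br q s) p + br (br s p) q = 0) ∧
    (∀ p q s, ip (br p q) s = ip p (br q s)) := by
  have hself : ∀ x : E, ⟪x, J x⟫ = 0 := by
    intro x
    have h := hJskew x x
    rw [real_inner_comm] at h
    linarith
  refine ⟨?_, ?_, ?_⟩
  · intro p
    simp [hbr, hself]
  · intro p q s
    simp only [hbr, Prod.mk_add_mk, Prod.mk_eq_zero]
    refine ⟨by ring, ?_, ?_⟩
    · simp only [inner_sub_left, inner_smul_left, map_sub, map_smul, inner_smul_right,
        conj_trivial, zero_smul, smul_sub]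
      rw [real_inner_comm (J p.2.2) (J q.2.2), real_inner_comm (J q.2.2) (J s.2.2),
        real_inner_comm (J s.2.2) (J p.2.2)]
      ring
    · simp only [map_sub, map_smul, zero_smul, smul_sub, smul_smul]
      abel_nf
      module
  · intro p q s
    simp only [hbr, hip, inner_sub_left, inner_sub_right, inner_smul_left, inner_smul_right,
      conj_trivial]
    rw [hJskew q.2.2 s.2.2, hJskew p.2.2 s.2.2]
    ring
end

section
/- Let W be a euclidean vector space with inner product ⟨-,-⟩, and J_i ∈ so(W), K_{ij} = -K_{ji} ∈ W for i,j = 1,...,r, and L_{ijk} ∈ ℝ totally skew. On g = ⊕_i(ℝu_i ⊕ ℝv_i) ⊕ W define brackets [u_i,u_j] = K_{ij} + Σ_k L_{ijk} v_k, [u_i,x] = J_i x - Σ_j ⟨K_{ij},x⟩ v_j, [x,y] = -Σ_i ⟨x,J_i y⟩ v_i, with all v_i central. Then the Jacobi identity for this bracket holds if and only if: (a) the J_i pairwise commute; (b) J_i K_{jk} + J_j K_{ki} + J_k K_{ij} = 0; and (c) ⟨K_{ℓi},K_{jk}⟩ + ⟨K_{ℓj},K_{ki}⟩ + ⟨K_{ℓk},K_{ij}⟩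 = 0 for all indices. -/
open scoped RealInnerProductSpace BigOperators

private theorem stmt13_rot_sum {M : Type*} [AddCommMonoid M] {r : ℕ}
    (f : Fin r → Fin r → Fin r → M) :
    ∑ m, ∑ i, ∑ j, f m i j = ∑ m, ∑ i, ∑ j, f i j m := by
  calc ∑ m, ∑ i, ∑ j, f m i j
      = ∑ i, ∑ j, ∑ m, f i j m := rfl
    _ = ∑ i, ∑ m, ∑ j, f i j m := Finset.sum_congr rfl fun i _ => Finset.sum_comm
    _ = ∑ m, ∑ i, ∑ j, f i j m := Finset.sum_comm

private theorem stmt13_vecKey {W : Type*} [NormedAddCommGroup W] [InnerProductSpace ℝ W] {r : ℕ}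
    (J : Fin r → (W →ₗ[ℝ] W)) (K : Fin r → Fin r → W)
    (ha : ∀ i j, J i ∘ₗ J j = J j ∘ₗ J i)
    (hb : ∀ i j k, J i (K j k) + J j (K k i) + J k (K i j) = 0)
    (a b e : Fin r → ℝ) (x y z : W) :
    (∑ l, e l • J l ((∑ i, ∑ j, (a i * b j) • K i j) + (∑ i, a i • J i y) - (∑ i, b i • J i x)))
    + (∑ l, a l • J l ((∑ i, ∑ j, (b i * e j) • K i j) + (∑ i, b i • J i z) - (∑ i, e i • J i y)))
    + (∑ l, b l • J l ((∑ i, ∑ j, (e i * a j) • K i j) + (∑ i, e i • J i x) - (∑ i, a i • J i z)))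
    = 0 := by
  have hcomm : ∀ (n o : Fin r) (w : W), J n (J o w) = J o (J n w) := by
    intro n o w
    have := LinearMap.congr_fun (ha n o) w
    simpa using this
  simp only [map_add, map_sub, map_sum, map_smul, smul_add, smul_sub, Finset.smul_sum, smul_smul]
  simp only [Finset.sum_add_distrib, Finset.sum_sub_distrib]
  have h1 : (∑ l, ∑ i, ∑ j, (a l * (b i * e j)) • J l (K i j))
      = ∑ l, ∑ i, ∑ j, (e l * (a i * b j)) • J i (K j l) := by
    rw [stmt13_rot_sum fun l i j => (a l * (b i * e j)) • J l (K i j)]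
    exact Finset.sum_congr rfl fun l _ => Finset.sum_congr rfl fun i _ =>
      Finset.sum_congr rfl fun j _ => by rw [show a i * (b j * e l) = e l * (a i * b j) by ring]
  have h2 : (∑ l, ∑ i, ∑ j, (b l * (e i * a j)) • J l (K i j))
      = ∑ l, ∑ i, ∑ j, (e l * (a i * b j)) • J j (K l i) := by
    rw [stmt13_rot_sum fun l i j => (b l * (e i * a j)) • J l (K i j),
        stmt13_rot_sum fun l i j => (b i * (e j * a l)) • J i (K j l)]
    exact Finset.sum_congr rfl fun l _ => Finset.sum_congr rfl fun i _ =>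
      Finset.sum_congr rfl fun j _ => by rw [show b j * (e l * a i) = e l * (a i * b j) by ring]
  have h3 : (∑ l, ∑ i, (a l * e i) • J l (J i y)) = ∑ l, ∑ i, (e l * a i) • J l (J i y) := by
    rw [Finset.sum_comm]
    exact Finset.sum_congr rfl fun l _ => Finset.sum_congr rfl fun i _ => by
      rw [show a i * e l = e l * a i by ring, hcomm i l]
  have h4 : (∑ l, ∑ i, (e l * b i) • J l (J i x)) = ∑ l, ∑ i, (b l * e i) • J l (J i x) := by
    rw [Finset.sum_comm]
    exact Finset.sum_congr rfl fun l _ => Finset.sum_congr rfl fun i _ => by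
      rw [show e i * b l = b l * e i by ring, hcomm i l]
  have h5 : (∑ l, ∑ i, (b l * a i) • J l (J i z)) = ∑ l, ∑ i, (a l * b i) • J l (J i z) := by
    rw [Finset.sum_comm]
    exact Finset.sum_congr rfl fun l _ => Finset.sum_congr rfl fun i _ => by
      rw [show b i * a l = a l * b i by ring, hcomm i l]
  rw [h1, h2, h3, h4, h5]
  have hK : (∑ l, ∑ i, ∑ j, (e l * (a i * b j)) • J l (K i j))
      + (∑ l, ∑ i, ∑ j, (e l * (a i * b j)) • J i (K j l))
      + (∑ l, ∑ i, ∑ j, (e l * (a i * b j)) • J j (K l i)) = 0 := by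
    have : ∀ l i j : Fin r, (e l * (a i * b j)) • J l (K i j)
        + (e l * (a i * b j)) • J i (K j l) + (e l * (a i * b j)) • J j (K l i) = 0 := by
      intro l i j
      rw [← smul_add, ← smul_add, hb l i j, smul_zero]
    calc (∑ l, ∑ i, ∑ j, (e l * (a i * b j)) • J l (K i j))
        + (∑ l, ∑ i, ∑ j, (e l * (a i * b j)) • J i (K j l))
        + (∑ l, ∑ i, ∑ j, (e l * (a i * b j)) • J j (K l i))
        = ∑ l, ∑ i, ∑ j, ((e l * (a i * b j)) • J l (K i j)
            + (e l * (a i * b j)) • J i (K j l) + (e l * (a i * b j)) • J j (K l i)) := by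
          simp only [Finset.sum_add_distrib]
      _ = 0 := by simp only [this, Finset.sum_const_zero]
  calc (∑ l, ∑ i, ∑ j, (e l * (a i * b j)) • J l (K i j))
        + (∑ l, ∑ i, (e l * a i) • J l (J i y)) - (∑ l, ∑ i, (b l * e i) • J l (J i x))
        + ((∑ l, ∑ i, ∑ j, (e l * (a i * b j)) • J i (K j l))
        + (∑ l, ∑ i, (a l * b i) • J l (J i z)) - (∑ l, ∑ i, (e l * a i) • J l (J i y)))
        + ((∑ l, ∑ i, ∑ j, (e l * (a i * b j)) • J j (K l i))
        + (∑ l, ∑ i, (b l * e i) • J l (J i x)) - (∑ l, ∑ i, (a l * b i) • J l (J i z)))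
      = (∑ l, ∑ i, ∑ j, (e l * (a i * b j)) • J l (K i j))
        + (∑ l, ∑ i, ∑ j, (e l * (a i * b j)) • J i (K j l))
        + (∑ l, ∑ i, ∑ j, (e l * (a i * b j)) • J j (K l i)) := by abel
    _ = 0 := hK

private theorem stmt13_scaKey {W : Type*} [NormedAddCommGroup W] [InnerProductSpace ℝ W] {r : ℕ}
    (J : Fin r → (W →ₗ[ℝ] W)) (K : Fin r → Fin r → W)
    (hJskew : ∀ i (x y : W), ⟪J i x, y⟫ = - ⟪x, J i y⟫)
    (hKskew : ∀ i j, K i j = - K j i)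
    (ha : ∀ i j, J i ∘ₗ J j = J j ∘ₗ J i)
    (hb : ∀ i j k, J i (K j k) + J j (K k i) + J k (K i j) = 0)
    (hc : ∀ i j k l, ⟪K l i, K j k⟫ + ⟪K l j, K k i⟫ + ⟪K l k, K i j⟫ = 0)
    (a b e : Fin r → ℝ) (x y z : W) (k : Fin r) :
    (∑ m, e m * ⟪K m k, (∑ i, ∑ j, (a i * b j) • K i j) + (∑ i, a i • J i y) - (∑ i, b i • J i x)⟫)
      - ⟪(∑ i, ∑ j, (a i * b j) • K i j) + (∑ i, a i • J i y) - (∑ i, b i • J i x), J k z⟫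
    + ((∑ m, a m * ⟪K m k, (∑ i, ∑ j, (b i * e j) • K i j) + (∑ i, b i • J i z) - (∑ i, e i • J i y)⟫)
      - ⟪(∑ i, ∑ j, (b i * e j) • K i j) + (∑ i, b i • J i z) - (∑ i, e i • J i y), J k x⟫)
    + ((∑ m, b m * ⟪K m k, (∑ i, ∑ j, (e i * a j) • K i j) + (∑ i, e i • J i x) - (∑ i, a i • J i z)⟫)
      - ⟪(∑ i, ∑ j, (e i * a j) • K i j) + (∑ i, e i • J i x) - (∑ i, a i • J i z), J k y⟫)
    = 0 := by
  have hcomm : ∀ (n o : Fin r) (w : W), J n (J o w) = J o (J n w) := by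
    intro n o w
    have := LinearMap.congr_fun (ha n o) w
    simpa using this
  have key1 : ∀ (m i : Fin r) (w : W),
      ⟪K m k, J i w⟫ - ⟪K i k, J m w⟫ - ⟪K m i, J k w⟫ = 0 := by
    intro m i w
    have e1 : ⟪K m k, J i w⟫ = - ⟪J i (K m k), w⟫ := by rw [hJskew]; ring
    have e2 : ⟪K i k, J m w⟫ = - ⟪J m (K i k), w⟫ := by rw [hJskew]; ring
    have e3 : ⟪K m i, J k w⟫ = - ⟪J k (K m i), w⟫ := by rw [hJskew]; ring
    have e4 : J m (K i k) = - J m (K k i) := by rw [hKskew i k]; simp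
    have e5 : J k (K m i) = - J k (K i m) := by rw [hKskew m i]; simp
    rw [e1, e2, e3, e4, e5, inner_neg_left, inner_neg_left]
    have := hb i m k
    have e6 : J i (K m k) = - (J m (K k i) + J k (K i m)) := by
      rw [eq_neg_iff_add_eq_zero]; linear_combination (norm := abel) this
    rw [e6, inner_neg_left, inner_add_left]
    ring
  have key2 : ∀ (i : Fin r) (v w : W), ⟪J i v, J k w⟫ = ⟪J i w, J k v⟫ := by
    intro i v w
    have h1 := hJskew i v (J k w)
    have h2 := hJskew k (J i w) v
    have h3 := real_inner_comm v (J k (J i w))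
    rw [hcomm i k] at h1
    linarith [h1, h2, h3]
  have key3 : ∀ m i j : Fin r,
      ⟪K m k, K i j⟫ + ⟪K i k, K j m⟫ + ⟪K j k, K m i⟫ = 0 := by
    intro m i j
    rw [hKskew m k, hKskew i k, hKskew j k]
    simp only [inner_neg_left]
    linarith [hc m i j k]
  simp only [inner_add_right, inner_sub_right, inner_add_left, inner_sub_left, inner_sum,
    sum_inner, real_inner_smul_left, real_inner_smul_right, Finset.mul_sum,
    mul_sub, mul_add, Finset.sum_sub_distrib, Finset.sum_add_distrib]
  have GKK : (∑ m, ∑ i, ∑ j, e m * (a i * b j * ⟪K m k, K i j⟫))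
      + (∑ m, ∑ i, ∑ j, a m * (b i * e j * ⟪K m k, K i j⟫))
      + (∑ m, ∑ i, ∑ j, b m * (e i * a j * ⟪K m k, K i j⟫)) = 0 := by
    rw [stmt13_rot_sum fun m i j => a m * (b i * e j * ⟪K m k, K i j⟫),
        stmt13_rot_sum fun m i j => b m * (e i * a j * ⟪K m k, K i j⟫),
        stmt13_rot_sum fun m i j => b i * (e j * a m * ⟪K i k, K j m⟫)]
    simp only [← Finset.sum_add_distrib]
    apply Finset.sum_eq_zero; intro m _
    apply Finset.sum_eq_zero; intro i _
    apply Finset.sum_eq_zero; intro j _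
    linear_combination (e m * a i * b j) * key3 m i j
  have Gy : (∑ m, ∑ i, e m * (a i * ⟪K m k, J i y⟫)) - (∑ m, ∑ i, a m * (e i * ⟪K m k, J i y⟫))
      - (∑ m, ∑ i, e m * a i * ⟪K m i, J k y⟫) = 0 := by
    rw [show (∑ m, ∑ i, a m * (e i * ⟪K m k, J i y⟫))
        = ∑ m, ∑ i, e m * (a i * ⟪K i k, J m y⟫) from
      Finset.sum_comm.trans (Finset.sum_congr rfl fun m _ => Finset.sum_congr rfl fun i _ => by ring)]
    simp only [← Finset.sum_sub_distrib]
    apply Finset.sum_eq_zero; intro m _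
    apply Finset.sum_eq_zero; intro i _
    linear_combination (e m * a i) * key1 m i y
  have Gx : (∑ m, ∑ i, b m * (e i * ⟪K m k, J i x⟫)) - (∑ m, ∑ i, e m * (b i * ⟪K m k, J i x⟫))
      - (∑ m, ∑ i, b m * e i * ⟪K m i, J k x⟫) = 0 := by
    rw [show (∑ m, ∑ i, e m * (b i * ⟪K m k, J i x⟫))
        = ∑ m, ∑ i, b m * (e i * ⟪K i k, J m x⟫) from
      Finset.sum_comm.trans (Finset.sum_congr rfl fun m _ => Finset.sum_congr rfl fun i _ => by ring)]
    simp only [← Finset.sum_sub_distrib]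
    apply Finset.sum_eq_zero; intro m _
    apply Finset.sum_eq_zero; intro i _
    linear_combination (b m * e i) * key1 m i x
  have Gz : (∑ m, ∑ i, a m * (b i * ⟪K m k, J i z⟫)) - (∑ m, ∑ i, b m * (a i * ⟪K m k, J i z⟫))
      - (∑ m, ∑ i, a m * b i * ⟪K m i, J k z⟫) = 0 := by
    rw [show (∑ m, ∑ i, b m * (a i * ⟪K m k, J i z⟫))
        = ∑ m, ∑ i, a m * (b i * ⟪K i k, J m z⟫) from
      Finset.sum_comm.trans (Finset.sum_congr rfl fun m _ => Finset.sum_congr rfl fun i _ => by ring)]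
    simp only [← Finset.sum_sub_distrib]
    apply Finset.sum_eq_zero; intro m _
    apply Finset.sum_eq_zero; intro i _
    linear_combination (a m * b i) * key1 m i z
  have Gj1 : (∑ i, a i * ⟪J i z, J k y⟫) = ∑ i, a i * ⟪J i y, J k z⟫ :=
    Finset.sum_congr rfl fun i _ => by rw [key2 i z y]
  have Gj2 : (∑ i, b i * ⟪J i z, J k x⟫) = ∑ i, b i * ⟪J i x, J k z⟫ :=
    Finset.sum_congr rfl fun i _ => by rw [key2 i z x]
  have Gj3 : (∑ i, e i * ⟪J i y, J k x⟫) = ∑ i, e i * ⟪J i x, J k y⟫ :=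
    Finset.sum_congr rfl fun i _ => by rw [key2 i y x]
  linear_combination GKK + Gy + Gx + Gz + Gj1 - Gj2 + Gj3

/-- on `g = ⊕ᵢ(ℝuᵢ ⊕ ℝvᵢ) ⊕ W` (elements `(a, c, x)` standing for
`Σ aᵢuᵢ + Σ cᵢvᵢ + x`) with brackets `[uᵢ,uⱼ] = K_{ij} + Σ_k L_{ijk}v_k`,
`[uᵢ,x] = Jᵢx - Σⱼ⟨K_{ij},x⟩vⱼ`, `[x,y] = -Σᵢ⟨x,Jᵢy⟩vᵢ` and `vᵢ` central, the Jacobi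
identity holds iff (a) the `Jᵢ` commute, (b) `JᵢK_{jk} + JⱼK_{ki} + J_kK_{ij} = 0`, and
(c) `⟨K_{ℓi},K_{jk}⟩ + ⟨K_{ℓj},K_{ki}⟩ + ⟨K_{ℓk},K_{ij}⟩ = 0`. -/
theorem stmt13 {W : Type*} [NormedAddCommGroup W] [InnerProductSpace ℝ W] {r : ℕ}
    (J : Fin r → (W →ₗ[ℝ] W)) (K : Fin r → Fin r → W) (L : Fin r → Fin r → Fin r → ℝ)
    (hJskew : ∀ i (x y : W), ⟪J i x, y⟫ = - ⟪x, J i y⟫)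
    (hKskew : ∀ i j, K i j = - K j i)
    (hLskew : ∀ i j k, L i j k = - L j i k ∧ L i j k = - L i k j)
    (br : ((Fin r → ℝ) × (Fin r → ℝ) × W) → ((Fin r → ℝ) × (Fin r → ℝ) × W) →
      ((Fin r → ℝ) × (Fin r → ℝ) × W))
    (hbr : ∀ p q, br p q =
      (0,
       fun k => (∑ i, ∑ j, p.1 i * q.1 j * L i j k)
         - (∑ i, p.1 i * ⟪K i k, q.2.2⟫) + (∑ i, q.1 i * ⟪K i k, p.2.2⟫)
         - ⟪p.2.2, J k q.2.2⟫,
       (∑ i, ∑ j, (p.1 i * q.1 j) • K i j)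
         + (∑ i, p.1 i • J i q.2.2) - (∑ i, q.1 i • J i p.2.2))) :
    (∀ p q s, br (br p q) s + br (br q s) p + br (br s p) q = 0) ↔
      ((∀ i j, J i ∘ₗ J j = J j ∘ₗ J i) ∧
       (∀ i j k, J i (K j k) + J j (K k i) + J k (K i j) = 0) ∧
       (∀ i j k l, ⟪K l i, K j k⟫ + ⟪K l j, K k i⟫ + ⟪K l k, K i j⟫ = 0)) := by
  constructor
  · intro h
    refine ⟨?_, ?_, ?_⟩
    · intro i j
      ext x
      have h2 := congrArg (fun t : (Fin r → ℝ) × (Fin r → ℝ) × W => t.2.2)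
        (h ((Pi.single i 1, 0, 0) : (Fin r → ℝ) × (Fin r → ℝ) × W)
           ((Pi.single j 1, 0, 0) : (Fin r → ℝ) × (Fin r → ℝ) × W)
           ((0,0,x) : (Fin r → ℝ) × (Fin r → ℝ) × W))
      simp only [hbr] at h2
      simp only [Pi.single_apply, Pi.zero_apply, zero_mul, mul_zero, zero_smul, smul_zero,
        Finset.sum_const_zero, add_zero, zero_add, sub_zero, zero_sub, ite_mul, one_mul,
        mul_ite, ite_smul, Finset.sum_ite_eq', Finset.mem_univ, if_true, inner_zero_right,
        map_zero, inner_zero_left, one_smul, Prod.snd_add, Prod.snd_zero, smul_neg, neg_neg,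
        Prod.fst_add, Prod.fst_zero] at h2
      simp only [map_neg, neg_neg] at h2
      simp only [LinearMap.comp_apply]
      exact neg_add_eq_zero.mp h2
    · intro i j k
      have h2 := congrArg (fun t : (Fin r → ℝ) × (Fin r → ℝ) × W => t.2.2)
        (h ((Pi.single i 1, 0, 0) : (Fin r → ℝ) × (Fin r → ℝ) × W)
           ((Pi.single j 1, 0, 0) : (Fin r → ℝ) × (Fin r → ℝ) × W)
           ((Pi.single k 1, 0, 0) : (Fin r → ℝ) × (Fin r → ℝ) × W))
      simp only [hbr] at h2
      simp only [Pi.single_apply, Pi.zero_apply, zero_mul, mul_zero, zero_smul, smul_zero,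
        Finset.sum_const_zero, add_zero, zero_add, sub_zero, zero_sub, ite_mul, one_mul,
        mul_ite, ite_smul, Finset.sum_ite_eq', Finset.mem_univ, if_true, inner_zero_right,
        map_zero, inner_zero_left, one_smul, Prod.snd_add, Prod.snd_zero, smul_neg, neg_neg,
        Prod.fst_add, Prod.fst_zero] at h2
      have h3 : J i (K j k) + J j (K k i) + J k (K i j)
          = -(-(J k (K i j)) + -(J i (K j k)) + -(J j (K k i))) := by abel
      rw [h3, h2, neg_zero]
    · intro i j k l
      have h2 := congrArg (fun t : (Fin r → ℝ) × (Fin r → ℝ) × W => t.2.1 l)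
        (h ((Pi.single i 1, 0, 0) : (Fin r → ℝ) × (Fin r → ℝ) × W)
           ((Pi.single j 1, 0, 0) : (Fin r → ℝ) × (Fin r → ℝ) × W)
           ((Pi.single k 1, 0, 0) : (Fin r → ℝ) × (Fin r → ℝ) × W))
      simp only [hbr] at h2
      simp only [Pi.single_apply, Pi.zero_apply, zero_mul, mul_zero, zero_smul, smul_zero,
        Finset.sum_const_zero, add_zero, zero_add, sub_zero, zero_sub, ite_mul, one_mul,
        mul_ite, ite_smul, Finset.sum_ite_eq', Finset.mem_univ, if_true, inner_zero_right,
        map_zero, inner_zero_left, one_smul, Prod.snd_add, Prod.snd_zero, smul_neg, neg_neg,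
        Prod.fst_add, Prod.fst_zero, Pi.add_apply] at h2
      rw [hKskew k l, hKskew i l, hKskew j l] at h2
      simp only [inner_neg_left] at h2
      linarith [h2]
  · rintro ⟨ha, hb, hc⟩ ⟨a, c, x⟩ ⟨b, d, y⟩ ⟨e, f, z⟩
    simp only [hbr]
    simp only [Pi.zero_apply, zero_mul, mul_zero, zero_smul, smul_zero,
      Finset.sum_const_zero, add_zero, zero_add, sub_zero, zero_sub]
    refine Prod.ext (by simp) (Prod.ext ?_ ?_)
    · simp only [Prod.snd_add, Prod.fst_add, Prod.snd_zero, Prod.fst_zero]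
      funext k
      simp only [Pi.add_apply, Pi.zero_apply]
      exact stmt13_scaKey J K hJskew hKskew ha hb hc a b e x y z k
    · simp only [Prod.snd_add, Prod.snd_zero]
      have hv := stmt13_vecKey J K ha hb a b e x y z
      rw [show ((0:W) = -(0:W)) by simp, ← hv]
      abel
end

section
/- Consider the map d₀: ℝ^r ⊗ W₀ → Λ³ℝ^r ⊗ W₀ given by (t_i) ↦ (J_{ij} t_k + J_{jk} t_i + J_{ki} t_j) and the map d₁: Λ³ℝ^r ⊗ W₀ → ℝ^r ⊗ Λ⁴ℝ^r ⊗ W₀ given by (K_{ijk}) ↦ (J_{ij} K_{kℓm} - J_{ℓm}K_{ijk} - J_{mk}K_{ijℓ} - J_{kℓ}K_{ijm}), where J_{ij} = -J_{ji} ∈ End(W₀). If the J_{ij} satisfy J_{ij}J_{kℓ} = J_{kℓ}J_{ij} and J_{jk}J_{iℓ} + J_{kℓ}J_{ij} + J_{jℓ}J_{ki} = 0, then d₁ ∘ d₀ = 0. -/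
/-- with `d₀ : (tᵢ) ↦ (J_{ij}t_k + J_{jk}tᵢ + J_{ki}tⱼ)` and
`d₁ : (K_{ijk}) ↦ (J_{ij}K_{kℓm} - J_{ℓm}K_{ijk} - J_{mk}K_{ijℓ} - J_{kℓ}K_{ijm})`,
if the skew family `J_{ij} ∈ End(W₀)` satisfies `J_{ij}J_{kℓ} = J_{kℓ}J_{ij}` and
`J_{jk}J_{iℓ} + J_{kℓ}J_{ij} + J_{jℓ}J_{ki} = 0`, then `d₁ ∘ d₀ = 0`. -/
theorem stmt14 {W₀ : Type*} [AddCommGroup W₀] [Module ℝ W₀] {r : ℕ}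
    (J : Fin r → Fin r → (W₀ →ₗ[ℝ] W₀))
    (hJskew : ∀ i j, J i j = - J j i)
    (hcomm : ∀ i j k l, J i j ∘ₗ J k l = J k l ∘ₗ J i j)
    (hquad : ∀ i j k l, J j k ∘ₗ J i l + J k l ∘ₗ J i j + J j l ∘ₗ J k i = 0) :
    ∀ t : Fin r → W₀, ∀ i j k l m,
      J i j (J k l (t m) + J l m (t k) + J m k (t l))
        - J l m (J i j (t k) + J j k (t i) + J k i (t j))
        - J m k (J i j (t l) + J j l (t i) + J l i (t j))
        - J k l (J i j (t m) + J j m (t i) + J m i (t j)) = 0 := by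
  intro t i j k l m
  have hc : ∀ a b c d (x : W₀), J a b (J c d x) = J c d (J a b x) := fun a b c d x => by
    have := DFunLike.congr_fun (hcomm a b c d) x
    simpa using this
  -- first quadratic identity applied to t i
  have q1 : J l m (J j k (t i)) + J m k (J j l (t i)) + J k l (J j m (t i)) = 0 := by
    have := DFunLike.congr_fun (hquad j l m k) (t i)
    simp only [LinearMap.add_apply, LinearMap.comp_apply, LinearMap.zero_apply] at this
    rw [hJskew l k, hJskew m j] at this
    simpa using this
  -- second quadratic identity applied to t j
  have q2 : J l m (J k i (t j)) + J m k (J l i (t j)) + J k l (J m i (t j)) = 0 := by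
    have := DFunLike.congr_fun (hquad i l m k) (t j)
    simp only [LinearMap.add_apply, LinearMap.comp_apply, LinearMap.zero_apply] at this
    rw [hJskew i k, hJskew i l, hJskew l k] at this
    simp only [LinearMap.neg_apply, map_neg, neg_neg] at this
    have h' : -(J l m (J k i (t j)) + J m k (J l i (t j)) + J k l (J m i (t j))) = 0 := by
      rw [← this]; abel
    exact neg_eq_zero.mp h'
  · -- main computation
    simp only [map_add]
    rw [hc i j k l (t m), hc i j l m (t k), hc i j m k (t l)]
    have expand : J k l (J i j (t m)) + J l m (J i j (t k)) + J m k (J i j (t l))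
        - (J l m (J i j (t k)) + J l m (J j k (t i)) + J l m (J k i (t j)))
        - (J m k (J i j (t l)) + J m k (J j l (t i)) + J m k (J l i (t j)))
        - (J k l (J i j (t m)) + J k l (J j m (t i)) + J k l (J m i (t j)))
        = -(J l m (J j k (t i)) + J m k (J j l (t i)) + J k l (J j m (t i)))
          - (J l m (J k i (t j)) + J m k (J l i (t j)) + J k l (J m i (t j))) := by
      abel
    rw [expand, q1, q2]
    simp
end
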